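/- arXiv:1908.10185 — 2 statements merged into one kernel-verified Lean document; each statement's English description precedes it below -/
import Mathlib

section
/- If I is a good ideal in K[x_1,…,x_n], then every minimal generator x_1^{α_1}x_2^{α_2}⋯x_n^{α_n} of I satisfies α_1/d_1 + α_2/d_2 + ⋯ + α_n/d_n ≥ 1. -/
open MvPolynomial

namespace GasanovaRR

/-- The monomial `x^α` in `K[x_1,…,x_n]`. -/
noncomputable def mono (K : Type*) [Field K] {n : ℕ} (α : Fin n → ℕ) :
    MvPolynomial (Fin n) K :=
  MvPolynomial.monomial (Finsupp.equivFunOnFinite.symm α) 1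

/-- `I` is a monomial ideal: it is generated by a set of monomials. -/
def IsMonomialIdeal {K : Type*} [Field K] {n : ℕ}
    (I : Ideal (MvPolynomial (Fin n) K)) : Prop :=
  ∃ A : Set (Fin n → ℕ), I = Ideal.span (mono K '' A)

/-- `x^α` is a minimal monomial generator of `I`, i.e. `x^α ∈ G(I)`:
`x^α ∈ I` and no monomial in `I` strictly divides it. -/
def IsMinGen {K : Type*} [Field K] {n : ℕ}
    (I : Ideal (MvPolynomial (Fin n) K)) (α : Fin n → ℕ) : Prop :=
  mono K α ∈ I ∧ ∀ β : Fin n → ℕ, mono K β ∈ I → β ≤ α → β = α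

/-- The point `α` lies in the box `B_{a_1,…,a_n}` (for box sizes `d_1,…,d_n`). -/
def InBox {n : ℕ} (d a α : Fin n → ℕ) : Prop :=
  ∀ i, a i * d i ≤ α i ∧ α i ≤ (a i + 1) * d i

/-- `I` is a good ideal (w.r.t. box sizes `d`): for every `l ≥ 1`, every minimal
generator of `I^l` lies in a box whose coordinate sum is `l - 1`. -/
def IsGood {K : Type*} [Field K] {n : ℕ}
    (I : Ideal (MvPolynomial (Fin n) K)) (d : Fin n → ℕ) : Prop :=
  ∀ l : ℕ, 1 ≤ l → ∀ α : Fin n → ℕ, IsMinGen (I ^ l) α →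
    ∃ a : Fin n → ℕ, InBox d a α ∧ ∑ i, a i = l - 1

/-- `I` is an `𝔪`-primary monomial ideal whose minimal generating set contains
`μ_i = x_i^{d_i}` with `d_i > 0` for each `i`. -/
def MPrimaryWithCorners {K : Type*} [Field K] {n : ℕ}
    (I : Ideal (MvPolynomial (Fin n) K)) (d : Fin n → ℕ) : Prop :=
  IsMonomialIdeal I ∧ I ≠ ⊤ ∧ (∀ i, 0 < d i) ∧ ∀ i, IsMinGen I (Pi.single i (d i))

/-- The ideal `I_{a_1,…,a_n}` associated to the box `B_{a_1,…,a_n}`, generated by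
`m / (μ_1^{a_1}⋯μ_n^{a_n})` for `m ∈ B_{a_1,…,a_n} ∩ G(I^l)`, `l = a_1+⋯+a_n+1`. -/
noncomputable def boxIdeal {K : Type*} [Field K] {n : ℕ}
    (I : Ideal (MvPolynomial (Fin n) K)) (d a : Fin n → ℕ) :
    Ideal (MvPolynomial (Fin n) K) :=
  Ideal.span ((fun α => mono K (α - fun i => a i * d i)) ''
    {α | InBox d a α ∧ IsMinGen (I ^ (∑ i, a i + 1)) α})

/-- The Ratliff–Rush closure `Ĩ = ⋃_{k ≥ 0} (I^{k+1} : I^k)`. -/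
noncomputable def ratliffRush {K : Type*} [Field K] {n : ℕ}
    (I : Ideal (MvPolynomial (Fin n) K)) : Ideal (MvPolynomial (Fin n) K) :=
  ⨆ k : ℕ, (I ^ (k + 1)).colon ((I ^ k : Ideal (MvPolynomial (Fin n) K)) : Set (MvPolynomial (Fin n) K))

/-- The cone in `ℕ^n` with set `S` of fixed coordinates and vertex `v`. -/
def Cone {n : ℕ} (S : Set (Fin n)) (v : Fin n → ℕ) : Set (Fin n → ℕ) :=
  {b | (∀ i ∈ S, b i = v i) ∧ ∀ i ∉ S, v i ≤ b i}

/-- `I` is a very good ideal: it is good and `I_{a_1,…,a_n} = I` for all boxes. -/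
def IsVeryGood {K : Type*} [Field K] {n : ℕ}
    (I : Ideal (MvPolynomial (Fin n) K)) (d : Fin n → ℕ) : Prop :=
  IsGood I d ∧ ∀ a : Fin n → ℕ, boxIdeal I d a = I

/-!
If `x^α ∈ I`, then `x^{lα} ∈ I^l`, so some minimal generator `β ≤ lα` of `I^l` lies in a box
`B_a` with `∑ aᵢ = l - 1`. Since `aᵢ dᵢ ≤ βᵢ ≤ l αᵢ`, this gives `l - 1 ≤ l ∑ αᵢ/dᵢ` for every
`l ≥ 1`, and letting `l → ∞` yields `∑ αᵢ/dᵢ ≥ 1`.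
-/

lemma mono_pow (K : Type*) [Field K] {n : ℕ} (α : Fin n → ℕ) (l : ℕ) :
    mono K α ^ l = mono K (l • α) := by
  rw [mono, mono, monomial_pow, one_pow]
  congr 2
  ext
  simp

lemma exists_isMinGen_le {K : Type*} [Field K] {n : ℕ} {J : Ideal (MvPolynomial (Fin n) K)}
    {γ : Fin n → ℕ} (hγ : mono K γ ∈ J) : ∃ β ≤ γ, IsMinGen J β := by
  obtain ⟨β, ⟨hβJ, hβγ⟩, hβmin⟩ :=
    ((Set.finite_Iic γ).subset fun _ h => h.2).exists_minimalFor id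
      {β | mono K β ∈ J ∧ β ≤ γ} ⟨γ, hγ, le_rfl⟩
  exact ⟨β, hβγ, hβJ, fun δ hδ hδβ => le_antisymm hδβ (hβmin ⟨hδ, hδβ.trans hβγ⟩ hδβ)⟩

lemma sum_le_sum_div_of_inBox {n : ℕ} {d a β : Fin n → ℕ} (hd : ∀ i, 0 < d i)
    (h : InBox d a β) : ∑ i, (a i : ℚ) ≤ ∑ i, (β i : ℚ) / d i :=
  Finset.sum_le_sum fun i _ =>
    (le_div_iff₀ (by exact_mod_cast hd i)).2 (by exact_mod_cast (h i).1)

lemma IsGood.sub_one_le_sum_div {K : Type*} [Field K] {n : ℕ}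
    {I : Ideal (MvPolynomial (Fin n) K)} {d : Fin n → ℕ} (hgood : IsGood I d)
    (hd : ∀ i, 0 < d i) {l : ℕ} (hl : 1 ≤ l) {β : Fin n → ℕ} (hβ : IsMinGen (I ^ l) β) :
    (l : ℚ) - 1 ≤ ∑ i, (β i : ℚ) / d i := by
  obtain ⟨a, hbox, hsum⟩ := hgood l hl β hβ
  calc (l : ℚ) - 1 = ∑ i, (a i : ℚ) := by
        rw [← Nat.cast_sum, hsum, Nat.cast_sub hl, Nat.cast_one]
    _ ≤ ∑ i, (β i : ℚ) / d i := sum_le_sum_div_of_inBox hd hbox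

lemma one_le_of_forall_natCast_sub_one_le_mul {𝕜 : Type*} [Field 𝕜] [LinearOrder 𝕜]
    [IsStrictOrderedRing 𝕜] [Archimedean 𝕜] {s : 𝕜}
    (h : ∀ l : ℕ, 1 ≤ l → (l : 𝕜) - 1 ≤ l * s) : 1 ≤ s := by
  by_contra! hs
  obtain ⟨m, hm⟩ := exists_nat_one_div_lt (sub_pos.2 hs)
  have hm0 : (0 : 𝕜) < m + 1 := by positivity
  have key := h (m + 1) (Nat.le_add_left 1 m)
  rw [div_lt_iff₀ hm0] at hm
  push_cast at key
  nlinarith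

/-- Theorem 3.6 (necessary condition): if `I` is a good ideal, then every minimal
generator `x^α` of `I` satisfies `α_1/d_1 + ⋯ + α_n/d_n ≥ 1`. -/
theorem necessary_condition {K : Type*} [Field K] {n : ℕ}
    (I : Ideal (MvPolynomial (Fin n) K)) (d : Fin n → ℕ)
    (hI : MPrimaryWithCorners I d) (hgood : IsGood I d) :
    ∀ α : Fin n → ℕ, IsMinGen I α → (1 : ℚ) ≤ ∑ i, (α i : ℚ) / (d i : ℚ) := by
  intro α hα
  refine one_le_of_forall_natCast_sub_one_le_mul fun l hl => ?_
  obtain ⟨β, hβα, hβ⟩ :=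
    exists_isMinGen_le (J := I ^ l) (mono_pow K α l ▸ Ideal.pow_mem_pow hα.1 l)
  calc (l : ℚ) - 1 ≤ ∑ i, (β i : ℚ) / d i := hgood.sub_one_le_sum_div hI.2.2.1 hl hβ
    _ ≤ ∑ i, (l : ℚ) * (α i / d i) := Finset.sum_le_sum fun i _ => by
        rw [mul_div_assoc']
        gcongr
        exact_mod_cast hβα i
    _ = l * ∑ i, (α i : ℚ) / d i := (Finset.mul_sum ..).symm

end GasanovaRR
end

section
/- For any good ideal I in K[x_1,…,x_n] there exists a finite partition of ℕ^n into cones such that whenever (a_1,…,a_n) and (b_1,…,b_n) lie in the same cone of the partition, I_{a_1,…,a_n} = I_{b_1,…,b_n}. -/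
/-!
Write a point of the box `B_a` as `σ + a * d` with `σ ≤ d`. It is a minimal generator of
`I ^ (|a| + 1)` iff `x^(σ + a d)` lies in that power while no `x^(σ + a d) / x_j` does. For fixed
`σ` and fixed shift (`1` or `x_j`), the set of `a` for which the shifted monomial lies in
`I ^ (|a| + 1)` is an upper set of `ℕ^n`, since multiplying by `μ^(b - a) ∈ I ^ |b - a|` passes
from `a` to `b ≥ a`. By Dickson's lemma an upper set has finitely many minimal elements, so for
`N` beyond their coordinates it is invariant under `a ↦ min a N`; there are finitely many `σ`
and shifts, hence `I_a = I_{min a N}`. The fibres of `a ↦ min a N` are the cones with vertex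
`v ∈ [0, N]^n` whose fixed coordinates are those with `v i < N`.
-/

open MvPolynomial

namespace GasanovaRR

section Monomials

variable {K : Type*} [Field K] {n : ℕ}

theorem mono_add (α β : Fin n → ℕ) : mono K (α + β) = mono K α * mono K β := by
  rw [mono, mono, mono, monomial_mul, one_mul]
  exact congrArg (monomial · 1) (Finsupp.ext fun _ => rfl)

theorem mono_zero : mono K (0 : Fin n → ℕ) = 1 := by
  rw [mono, show Finsupp.equivFunOnFinite.symm (0 : Fin n → ℕ) = 0 from Finsupp.ext fun _ => rfl,
    monomial_zero', C_1]

theorem mono_sum {ι : Type*} (s : Finset ι) (f : ι → Fin n → ℕ) :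
    mono K (∑ i ∈ s, f i) = ∏ i ∈ s, mono K (f i) := by
  classical
  induction s using Finset.induction_on with
  | empty => exact mono_zero
  | insert i s hi ih => rw [Finset.sum_insert hi, Finset.prod_insert hi, mono_add, ih]

theorem mono_nsmul (k : ℕ) (α : Fin n → ℕ) : mono K (k • α) = mono K α ^ k := by
  induction k with
  | zero => rw [zero_smul, pow_zero, mono_zero]
  | succ k ih => rw [succ_nsmul, pow_succ, mono_add, ih]

theorem mono_mem_of_le {J : Ideal (MvPolynomial (Fin n) K)} {α β : Fin n → ℕ}
    (h : mono K α ∈ J) (hle : α ≤ β) : mono K β ∈ J := by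
  obtain ⟨γ, rfl⟩ := exists_add_of_le hle
  rw [mono_add]
  exact J.mul_mem_right _ h

theorem isMinGen_iff {J : Ideal (MvPolynomial (Fin n) K)} {α : Fin n → ℕ} :
    IsMinGen J α ↔
      mono K α ∈ J ∧ ∀ j β, β + Pi.single j 1 = α → mono K β ∉ J := by
  refine and_congr_right fun hα => ⟨fun hmin j β hβ hβJ => ?_, fun hstep β hβJ hle => ?_⟩
  · simpa [← hβ] using congrFun (hmin β hβJ (hβ ▸ le_self_add)) j
  · by_contra hne
    obtain ⟨j, hj⟩ := Function.ne_iff.mp hne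
    have hlt : β j < α j := (hle j).lt_of_ne hj
    refine hstep j (α - Pi.single j 1) ?_ (mono_mem_of_le hβJ fun i => ?_)
    · ext i
      rcases eq_or_ne i j with rfl | hij
      · simp only [Pi.add_apply, Pi.sub_apply, Pi.single_eq_same]
        omega
      · simp [hij]
    · rcases eq_or_ne i j with rfl | hij
      · simp only [Pi.sub_apply, Pi.single_eq_same]
        omega
      · simpa [hij] using hle i

end Monomials

section Powers

variable {K : Type*} [Field K] {n : ℕ} {I : Ideal (MvPolynomial (Fin n) K)} {d : Fin n → ℕ}

theorem mono_mul_mem_pow_sum (hμ : ∀ i, mono K (Pi.single i (d i)) ∈ I) (c : Fin n → ℕ) :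
    mono K (c * d) ∈ I ^ ∑ i, c i := by
  classical
  have hcd : c * d = ∑ i, c i • Pi.single i (d i) := by
    simp_rw [← Pi.single_smul, smul_eq_mul]
    exact (Finset.univ_sum_single _).symm
  rw [hcd, mono_sum, ← Finset.prod_pow_eq_pow_sum]
  exact Ideal.prod_mem_prod fun i _ => mono_nsmul (K := K) (c i) _ ▸ Ideal.pow_mem_pow (hμ i) _

theorem mono_add_mul_mem_pow_of_le (hμ : ∀ i, mono K (Pi.single i (d i)) ∈ I)
    {a b β : Fin n → ℕ} (hab : a ≤ b) (h : mono K β ∈ I ^ (∑ i, a i + 1)) :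
    mono K (β + (b - a) * d) ∈ I ^ (∑ i, b i + 1) := by
  have hsum : ∑ i, a i + 1 + ∑ i, (b - a) i = ∑ i, b i + 1 := by
    rw [add_right_comm, ← Finset.sum_add_distrib]
    simp only [Pi.sub_apply, add_tsub_cancel_of_le (hab _)]
  rw [mono_add, ← hsum, pow_add]
  exact Ideal.mul_mem_mul h (mono_mul_mem_pow_sum hμ _)

variable (I d) in
def memPowSet (γ ε : Fin n → ℕ) : Set (Fin n → ℕ) :=
  {a | ∃ β, β + ε = γ + a * d ∧ mono K β ∈ I ^ (∑ i, a i + 1)}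

theorem isUpperSet_memPowSet (hμ : ∀ i, mono K (Pi.single i (d i)) ∈ I) (γ ε : Fin n → ℕ) :
    IsUpperSet (memPowSet I d γ ε) := by
  rintro a b hab ⟨β, hβ, hβI⟩
  refine ⟨β + (b - a) * d, ?_, mono_add_mul_mem_pow_of_le hμ hab hβI⟩
  rw [add_right_comm, hβ, add_assoc, ← add_mul, add_tsub_cancel_of_le hab]

theorem isMinGen_pow_iff_memPowSet {γ a : Fin n → ℕ} :
    IsMinGen (I ^ (∑ i, a i + 1)) (γ + a * d) ↔
      a ∈ memPowSet I d γ 0 ∧ ∀ j, a ∉ memPowSet I d γ (Pi.single j 1) := by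
  simp [isMinGen_iff, memPowSet]

end Powers

def cap {ι : Type*} (N : ℕ) (a : ι → ℕ) : ι → ℕ := a ⊓ fun _ => N

theorem IsUpperSet.eventually_forall_cap_mem_iff {ι : Type*} [Finite ι] {U : Set (ι → ℕ)}
    (hU : IsUpperSet U) : ∀ᶠ N in Filter.atTop, ∀ a, cap N a ∈ U ↔ a ∈ U := by
  have hmin : {m | Minimal (· ∈ U) m}.Finite :=
    WellQuasiOrderedLE.finite_of_isAntichain (setOfPred_minimal_antichain _)
  have hbound : ∀ᶠ N in Filter.atTop, ∀ m ∈ {m | Minimal (· ∈ U) m}, ∀ i, m i ≤ N :=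
    hmin.eventually_all.2 fun m _ => Filter.eventually_all.2 fun i => Filter.eventually_ge_atTop _
  filter_upwards [hbound] with N hN a
  refine ⟨fun h => hU inf_le_left h, fun ha => ?_⟩
  obtain ⟨m, hma, hm⟩ := exists_minimal_le_of_wellFoundedLT (· ∈ U) a ha
  exact hU (le_inf hma (hN m hm)) hm.prop

section BoxIdeal

variable {K : Type*} [Field K] {n : ℕ}

theorem inBox_iff {d a α : Fin n → ℕ} : InBox d a α ↔ a * d ≤ α ∧ α - a * d ≤ d := by
  simp only [InBox, Pi.le_def, ← forall_and, Pi.sub_apply, Pi.mul_apply, add_one_mul]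
  exact forall_congr' fun i => by omega

theorem boxIdeal_eq_span (I : Ideal (MvPolynomial (Fin n) K)) (d a : Fin n → ℕ) :
    boxIdeal I d a = Ideal.span (mono K ''
      {σ | σ ≤ d ∧ IsMinGen (I ^ (∑ i, a i + 1)) (σ + a * d)}) := by
  change Ideal.span ((fun α => mono K (α - a * d)) '' _) = _
  rw [← Set.image_image (mono K) (· - a * d)]
  congr 2
  ext σ
  constructor
  · rintro ⟨α, ⟨hbox, hmin⟩, rfl⟩
    rw [inBox_iff] at hbox
    exact ⟨hbox.2, by rwa [tsub_add_cancel_of_le hbox.1]⟩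
  · rintro ⟨hσ, hmin⟩
    refine ⟨σ + a * d, ⟨?_, hmin⟩, add_tsub_cancel_right _ _⟩
    rw [inBox_iff, add_tsub_cancel_right]
    exact ⟨le_add_self, hσ⟩

theorem eventually_forall_boxIdeal_cap_eq {I : Ideal (MvPolynomial (Fin n) K)} {d : Fin n → ℕ}
    (hμ : ∀ i, mono K (Pi.single i (d i)) ∈ I) :
    ∀ᶠ N in Filter.atTop, ∀ a, boxIdeal I d (cap N a) = boxIdeal I d a := by
  have hfin : (Set.Iic d ×ˢ insert 0 (Set.range fun j => (Pi.single j 1 : Fin n → ℕ))).Finite :=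
    (Set.finite_Iic d).prod ((Set.finite_range _).insert 0)
  filter_upwards [hfin.eventually_all.2 fun p _ =>
    IsUpperSet.eventually_forall_cap_mem_iff (isUpperSet_memPowSet hμ p.1 p.2)] with N hN a
  simp only [boxIdeal_eq_span, isMinGen_pow_iff_memPowSet]
  congr 3
  ext σ
  exact and_congr_right fun hσ => and_congr (hN (σ, 0) ⟨hσ, .inl rfl⟩ a)
    (forall_congr' fun j => not_congr (hN (σ, Pi.single j 1) ⟨hσ, .inr ⟨j, rfl⟩⟩ a))

end BoxIdeal

section Cones

variable {n : ℕ}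

theorem mem_cone_iff_cap_eq {N : ℕ} {v : Fin n → ℕ} (hv : v ≤ fun _ => N) {b : Fin n → ℕ} :
    b ∈ Cone ↑(Finset.univ.filter fun i => v i < N) v ↔ cap N b = v := by
  simp only [Cone, Finset.coe_filter, Finset.mem_univ, true_and, Set.mem_ofPred_eq, funext_iff,
    cap, Pi.inf_apply, ← forall_and]
  exact forall_congr' fun i => by have : v i ≤ N := hv i; omega

theorem exists_cone_partition_of_cap_eq {α : Type*} (f : (Fin n → ℕ) → α) (N : ℕ)
    (hf : ∀ a, f (cap N a) = f a) :
    ∃ F : Finset (Finset (Fin n) × (Fin n → ℕ)),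
      (⋃ c ∈ F, Cone (↑c.1) c.2) = Set.univ ∧
      (∀ c ∈ F, ∀ c' ∈ F, c ≠ c' → Disjoint (Cone (↑c.1) c.2) (Cone (↑c'.1) c'.2)) ∧
      ∀ c ∈ F, ∀ a ∈ Cone (↑c.1) c.2, ∀ b ∈ Cone (↑c.1) c.2, f a = f b := by
  classical
  refine ⟨(Finset.Iic fun _ => N).image fun v => (Finset.univ.filter fun i => v i < N, v),
    ?_, ?_, ?_⟩
  · refine Set.eq_univ_of_forall fun b => Set.mem_iUnion₂.2 ⟨_, Finset.mem_image_of_mem _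
      (Finset.mem_Iic.2 inf_le_right), (mem_cone_iff_cap_eq inf_le_right).2 rfl⟩
  · simp only [Finset.forall_mem_image, Finset.mem_Iic]
    intro v hv w hw hne
    refine Set.disjoint_left.2 fun b hbv hbw => hne ?_
    rw [← (mem_cone_iff_cap_eq hv).1 hbv, ← (mem_cone_iff_cap_eq hw).1 hbw]
  · simp only [Finset.forall_mem_image, Finset.mem_Iic]
    intro v hv a ha b hb
    rw [← hf a, ← hf b, (mem_cone_iff_cap_eq hv).1 ha, (mem_cone_iff_cap_eq hv).1 hb]

end Cones

theorem finite_coloring_general {K : Type*} [Field K] {n : ℕ}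
    (I : Ideal (MvPolynomial (Fin n) K)) (d : Fin n → ℕ)
    (hI : MPrimaryWithCorners I d) :
    ∃ F : Finset (Finset (Fin n) × (Fin n → ℕ)),
      (⋃ c ∈ F, Cone (↑c.1) c.2) = Set.univ ∧
      (∀ c ∈ F, ∀ c' ∈ F, c ≠ c' →
        Disjoint (Cone (↑c.1) c.2) (Cone (↑c'.1) c'.2)) ∧
      ∀ c ∈ F, ∀ a ∈ Cone (↑c.1) c.2, ∀ b ∈ Cone (↑c.1) c.2,
        boxIdeal I d a = boxIdeal I d b := by
  obtain ⟨N, hN⟩ := (eventually_forall_boxIdeal_cap_eq fun i => (hI.2.2.2 i).1).exists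
  exact exists_cone_partition_of_cap_eq (boxIdeal I d) N hN

/-- Theorem 5.9: for a good ideal `I` there is a finite partition of `ℕ^n` into
cones such that whenever `a` and `b` lie in the same cone, `I_{a} = I_{b}`. -/
theorem finite_coloring {K : Type*} [Field K] {n : ℕ}
    (I : Ideal (MvPolynomial (Fin n) K)) (d : Fin n → ℕ)
    (hI : MPrimaryWithCorners I d) (hgood : IsGood I d) :
    ∃ F : Finset (Finset (Fin n) × (Fin n → ℕ)),
      (⋃ c ∈ F, Cone (↑c.1) c.2) = Set.univ ∧
      (∀ c ∈ F, ∀ c' ∈ F, c ≠ c' →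
        Disjoint (Cone (↑c.1) c.2) (Cone (↑c'.1) c'.2)) ∧
      ∀ c ∈ F, ∀ a ∈ Cone (↑c.1) c.2, ∀ b ∈ Cone (↑c.1) c.2,
        boxIdeal I d a = boxIdeal I d b :=
  finite_coloring_general I d hI

end GasanovaRR
end
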